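/- arXiv:1803.01423 — 6 statements merged into one kernel-verified Lean document; each statement's English description precedes it below -/
import Mathlib

section
/- Let p be an odd prime, u a positive odd integer coprime to p, and w a positive even integer with wp - u > 0. Then the product of Jacobi symbols (p/u)·(p/(wp−u)) equals (−1)^{(p−1)w/4}. -/
/-!
By quadratic reciprocity, `(p/u)(p/v) = ± (u/p)(v/p)`, and when `p ∣ u + v` the supplementary law
gives `(v/p) = (-u/p) = (-1)^((p-1)/2) (u/p)`, so the product is a pure sign since `(u/p)² = 1`.
Collecting the exponents, that sign only depends on `(u + v)/2`, which is `p · w/2` for `v = wp − u`.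
-/

open scoped NumberTheorySymbols

namespace jacobiSym

theorem natCast_eq_neg_one_pow_mul_of_dvd_add {p u v : ℕ} (hp : Odd p) (hdvd : p ∣ u + v) :
    J(v | p) = (-1) ^ (p / 2) * J(u | p) := by
  have hmod : (v : ℤ) ≡ -u [ZMOD p] := by
    rw [Int.modEq_iff_dvd, ← neg_add', dvd_neg]
    exact_mod_cast hdvd
  rw [mod_left' hmod, jacobiSym.neg _ hp, ZMod.χ₄_eq_neg_one_pow (Nat.odd_iff.mp hp)]

theorem mul_eq_neg_one_pow_of_dvd_add {p u v : ℕ} (hp : Odd p) (hu : Odd u) (hv : Odd v)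
    (hcop : u.Coprime p) (hdvd : p ∣ u + v) :
    J(p | u) * J(p | v) = (-1) ^ (p / 2 * ((u + v) / 2)) := by
  have hsq : J(u | p) ^ 2 = 1 := sq_one <| by simpa [Int.gcd_natCast_natCast] using hcop
  have hhalf : (u + v) / 2 = u / 2 + v / 2 + 1 := by
    obtain ⟨i, rfl⟩ := hu; obtain ⟨j, rfl⟩ := hv; omega
  rw [quadratic_reciprocity hp hu, quadratic_reciprocity hp hv,
    natCast_eq_neg_one_pow_mul_of_dvd_add hp hdvd, hhalf, mul_add, mul_add, mul_one, pow_add,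
    pow_add]
  linear_combination ((-1 : ℤ) ^ (p / 2 * (u / 2)) * (-1) ^ (p / 2 * (v / 2)) * (-1) ^ (p / 2)) * hsq

end jacobiSym

theorem stmt_6_general (p u w : ℕ) (hpodd : Odd p)
    (hu : Odd u) (hcop : Nat.Coprime u p)
    (hw : Even w) (hlt : u < w * p) :
    jacobiSym (p : ℤ) u * jacobiSym (p : ℤ) (w * p - u)
      = (-1 : ℤ) ^ ((p - 1) * w / 4) := by
  have hsum : u + (w * p - u) = w * p := Nat.add_sub_cancel' hlt.le
  have hv : Odd (w * p - u) := Nat.Even.sub_odd hlt.le (hw.mul_right p) hu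
  have hexp : p / 2 * (w * p / 2) = p * ((p - 1) * w / 4) := by
    obtain ⟨k, rfl⟩ := hpodd
    obtain ⟨j, rfl⟩ := hw
    have hwp : (j + j) * (2 * k + 1) = 2 * (j * (2 * k + 1)) := by ring
    have hpw : (2 * k + 1 - 1) * (j + j) = 4 * (k * j) := by rw [Nat.add_sub_cancel]; ring
    rw [hwp, hpw, Nat.mul_div_cancel_left _ two_pos, Nat.mul_div_cancel_left _ four_pos,
      show (2 * k + 1) / 2 = k by omega]
    ring
  have hdvd : p ∣ u + (w * p - u) := hsum.symm ▸ dvd_mul_left p w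
  rw [jacobiSym.mul_eq_neg_one_pow_of_dvd_add hpodd hu hv hcop hdvd, hsum, hexp, pow_mul,
    hpodd.neg_one_pow]

/-- For `u` positive odd coprime to the odd prime `p` and `w` positive even
with `wp − u > 0`, the product of Jacobi symbols
`(p/u)·(p/(wp−u))` equals `(−1)^{(p−1)w/4}`. -/
theorem stmt_6 (p u w : ℕ) (hp : p.Prime) (hpodd : Odd p)
    (hu : Odd u) (hupos : 0 < u) (hcop : Nat.Coprime u p)
    (hw : Even w) (hwpos : 0 < w) (hlt : u < w * p) :
    jacobiSym (p : ℤ) u * jacobiSym (p : ℤ) (w * p - u)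
      = (-1 : ℤ) ^ ((p - 1) * w / 4) :=
  stmt_6_general p u w hpodd hu hcop hw hlt
end

section
/- Let m be a positive odd integer and let f be an automorphism of a cyclotomic field containing Q(ζ_m, i, √m). Let r be an integer coprime to m with f(ζ_m) = ζ_m^r, and let ε(i,f) ∈ {±1} be defined by f(i) = ε(i,f)·i. Then f(√m) = ε(i,f)^{(m−1)/2} · (r/m) · √m, where (r/m) is the Jacobi symbol. -/
/-!
For a prime `p ∣ m` put `ζₚ = ζ ^ (m / p)`. The quadratic Gauss sum `g = ∑ₐ (a/p) ζₚᵃ`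
satisfies `g² = (-1)^((p-1)/2) p`, and since `f` sends `ζₚ` to `ζₚʳ`, reindexing `a ↦ ra` gives
`f g = ∑ₐ (a/p) ζₚ^(ra) = (r/p) g`. Hence `g i^((p-1)/2)` is a square root of `p` which `f`
multiplies by `ε^((p-1)/2) (r/p)`. Multiplying such square roots over the prime factors of `m`
yields a square root of `m` multiplied by `ε^((m-1)/2) (r/m)`, because
`(ab-1)/2 ≡ (a-1)/2 + (b-1)/2 (mod 2)` for odd `a, b` and `ε² = 1` (apply `f` to `i² = -1`);
and `√m` is plus or minus that square root.
-/

open MulChar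

section

variable {K F : Type*} [Field K] [FunLike F K K] [RingHomClass F K K]

def ScalesSomeSqrt (f : F) (a c : K) : Prop :=
  ∃ t : K, t ^ 2 = a ∧ f t = c * t

namespace ScalesSomeSqrt

variable {f : F} {a b c d : K}

theorem mul (h₁ : ScalesSomeSqrt f a c) (h₂ : ScalesSomeSqrt f b d) :
    ScalesSomeSqrt f (a * b) (c * d) := by
  obtain ⟨s, hs, hfs⟩ := h₁
  obtain ⟨t, ht, hft⟩ := h₂
  exact ⟨s * t, by rw [mul_pow, hs, ht], by rw [map_mul, hfs, hft]; ring⟩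

theorem map_eq_mul (h : ScalesSomeSqrt f a c) {s : K} (hs : s ^ 2 = a) : f s = c * s := by
  obtain ⟨t, ht, hft⟩ := h
  rcases sq_eq_sq_iff_eq_or_eq_neg.mp (hs.trans ht.symm) with rfl | rfl
  · exact hft
  · rw [map_neg, hft, mul_neg]

end ScalesSomeSqrt

theorem sq_eq_one_of_map_eq_mul {f : F} {i c : K} (hi : i ^ 2 = -1) (hfi : f i = c * i) :
    c ^ 2 = 1 := by
  have h := congrArg f hi
  rw [map_pow, map_neg, map_one, hfi, mul_pow, hi] at h
  linear_combination -h

theorem AddChar.map_apply_eq_apply_intCast_mul {n : ℕ} {f : F} (ψ : AddChar (ZMod n) K) {r : ℤ}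
    (h : f (ψ 1) = ψ 1 ^ r) (x : ZMod n) : f (ψ x) = ψ (r * x) := by
  have hψ (k : ℤ) : ψ k = ψ 1 ^ k := by rw [← zsmul_one, AddChar.map_zsmul_eq_zpow]
  rw [← ZMod.intCast_zmod_cast x, ← Int.cast_mul, hψ, hψ, map_zpow₀, h, ← zpow_mul]

theorem map_gaussSum_of_isQuadratic {R : Type*} [CommRing R] [Fintype R] {χ : MulChar R K}
    (hχ : χ.IsQuadratic) {ψ : AddChar R K} {f : F} (hfχ : ∀ x, f (χ x) = χ x) (u : Rˣ)
    (hfψ : ∀ x, f (ψ x) = ψ (u * x)) :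
    f (gaussSum χ ψ) = χ u * gaussSum χ ψ := by
  have hmap : f (gaussSum χ ψ) = gaussSum χ (ψ.mulShift u) := by
    simp only [gaussSum, map_sum, map_mul, hfχ, hfψ, AddChar.mulShift_apply]
  have hu : χ u * χ u = 1 := by
    rw [← sq, ← pow_apply_coe, hχ.sq_eq_one, one_apply_coe]
  rw [hmap, ← gaussSum_mulShift χ ψ u, ← mul_assoc, hu, one_mul]

theorem gaussSum_quadraticChar_sq [CharZero K] {p : ℕ} [Fact p.Prime] (hp : p ≠ 2)
    {ψ : AddChar (ZMod p) K} (hψ : ψ.IsPrimitive) :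
    gaussSum ((quadraticChar (ZMod p)).ringHomComp (Int.castRingHom K)) ψ ^ 2 =
      (-1) ^ ((p - 1) / 2) * p := by
  have hchar : ringChar (ZMod p) ≠ 2 := by rwa [ZMod.ringChar_zmod_n]
  have hχ : (quadraticChar (ZMod p)).ringHomComp (Int.castRingHom K) ≠ 1 :=
    (ringHomComp_ne_one_iff Int.cast_injective).mpr (quadraticChar_ne_one hchar)
  have hp2 : p % 2 = 1 := Nat.odd_iff.mp ((Fact.out : p.Prime).odd_of_ne_two hp)
  rw [gaussSum_sq hχ ((quadraticChar_isQuadratic _).comp _) hψ, ringHomComp_apply,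
    quadraticChar_neg_one hchar, ZMod.card, ZMod.χ₄_eq_neg_one_pow hp2,
    show p / 2 = (p - 1) / 2 by omega, map_pow, map_neg, map_one]

theorem pow_mul_sub_one_div_two {M : Type*} [Monoid M] {x : M} (hx : x ^ 2 = 1) {a b : ℕ}
    (ha : Odd a) (hb : Odd b) :
    x ^ ((a * b - 1) / 2) = x ^ ((a - 1) / 2) * x ^ ((b - 1) / 2) := by
  obtain ⟨u, rfl⟩ := ha
  obtain ⟨v, rfl⟩ := hb
  have h : (2 * u + 1) * (2 * v + 1) = 2 * (2 * (u * v) + u + v) + 1 := by ring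
  rw [h]
  simp only [Nat.add_sub_cancel, Nat.mul_div_cancel_left _ two_pos, pow_add, pow_mul, hx, one_pow,
    one_mul]

theorem scalesSomeSqrt_prime [CharZero K] {p : ℕ} [Fact p.Prime] (hp : p ≠ 2) {f : F} {ζ i c : K}
    (hζ : IsPrimitiveRoot ζ p) (hi : i ^ 2 = -1) (hfi : f i = c * i) {r : ℤ}
    (hfζ : f ζ = ζ ^ r) (hr : (r : ZMod p) ≠ 0) :
    ScalesSomeSqrt f (p : K) (c ^ ((p - 1) / 2) * legendreSym p r) := by
  have : NeZero p := ⟨(Fact.out : p.Prime).ne_zero⟩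
  set ψ := AddChar.zmodChar p hζ.pow_eq_one
  set χ := (quadraticChar (ZMod p)).ringHomComp (Int.castRingHom K)
  set g := gaussSum χ ψ
  set e := (p - 1) / 2
  have hg : g ^ 2 = (-1) ^ e * p :=
    gaussSum_quadraticChar_sq hp (AddChar.zmodChar_primitive_of_primitive_root p hζ)
  have hψ : ψ 1 = ζ := by simpa using AddChar.zmodChar_apply' hζ.pow_eq_one 1
  have hfψ : ∀ x, f (ψ x) = ψ ((isUnit_iff_ne_zero.mpr hr).unit * x) :=
    ψ.map_apply_eq_apply_intCast_mul (by rw [hψ, hfζ])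
  have hfg : f g = legendreSym p r * g :=
    map_gaussSum_of_isQuadratic ((quadraticChar_isQuadratic _).comp _)
      (fun _ ↦ map_intCast f _) _ hfψ
  refine ⟨g * i ^ e, ?_, ?_⟩
  · rw [mul_pow, hg, ← pow_mul, mul_comm e, pow_mul, hi, mul_right_comm, ← mul_pow, neg_one_mul,
      neg_neg, one_pow, one_mul]
  · rw [map_mul, map_pow, hfg, hfi]
    ring

theorem scalesSomeSqrt_of_dvd [CharZero K] {m : ℕ} (hm : Odd m) {f : F} {ζ i c : K}
    (hζ : IsPrimitiveRoot ζ m) (hi : i ^ 2 = -1) (hfi : f i = c * i) {r : ℤ}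
    (hr : IsCoprime r m) (hfζ : f ζ = ζ ^ r) {d : ℕ} (hd : d ∣ m) :
    ScalesSomeSqrt f (d : K) (c ^ ((d - 1) / 2) * jacobiSym r d) := by
  induction d using Nat.recOnMul with
  | zero => exact absurd (Nat.eq_zero_of_zero_dvd hd) hm.pos.ne'
  | one => exact ⟨1, by simp, by simp⟩
  | prime p hp =>
    have : Fact p.Prime := ⟨hp⟩
    have hp2 : p ≠ 2 := by
      rintro rfl
      exact Nat.not_even_iff_odd.mpr hm (even_iff_two_dvd.mpr hd)
    have hζp : IsPrimitiveRoot (ζ ^ (m / p)) p := hζ.pow hm.pos (Nat.div_mul_cancel hd).symm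
    have hfζp : f (ζ ^ (m / p)) = (ζ ^ (m / p)) ^ r := by
      rw [map_pow, hfζ, ← zpow_natCast, ← zpow_natCast, ← zpow_mul, ← zpow_mul, mul_comm]
    have hrp : (r : ZMod p) ≠ 0 := by
      rw [ne_eq, ZMod.intCast_zmod_eq_zero_iff_dvd]
      intro hpr
      have hpp : IsCoprime (p : ℤ) p :=
        (hr.of_isCoprime_of_dvd_left hpr).of_isCoprime_of_dvd_right (Int.natCast_dvd_natCast.mpr hd)
      exact hp.ne_one (Nat.isUnit_iff.mp (Int.ofNat_isUnit.mp (isCoprime_self.mp hpp)))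
    rw [← jacobiSym.legendreSym.to_jacobiSym]
    exact scalesSomeSqrt_prime hp2 hζp hi hfi hfζp hrp
  | mul a b iha ihb =>
    have ha : Odd a := hm.of_dvd_nat (dvd_of_mul_right_dvd hd)
    have hb : Odd b := hm.of_dvd_nat (dvd_of_mul_left_dvd hd)
    rw [Nat.cast_mul, jacobiSym.mul_right' r ha.pos.ne' hb.pos.ne', Int.cast_mul,
      pow_mul_sub_one_div_two (sq_eq_one_of_map_eq_mul hi hfi) ha hb, mul_mul_mul_comm]
    exact (iha (dvd_of_mul_right_dvd hd)).mul (ihb (dvd_of_mul_left_dvd hd))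

end

theorem stmt_7_general (m : ℕ) (hm : Odd m) (n : ℕ+)
    (ζ im sm : CyclotomicField n ℚ)
    (hζ : IsPrimitiveRoot ζ m) (him : im ^ 2 = -1) (hsm : sm ^ 2 = (m : CyclotomicField n ℚ))
    (f : CyclotomicField n ℚ ≃ₐ[ℚ] CyclotomicField n ℚ)
    (r : ℤ) (hr : IsCoprime r (m : ℤ)) (hfζ : f ζ = ζ ^ r)
    (ε : ℤ) (hfi : f im = (ε : CyclotomicField n ℚ) * im) :
    f sm = (ε : CyclotomicField n ℚ) ^ ((m - 1) / 2) *
      (jacobiSym r m : CyclotomicField n ℚ) * sm :=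
  (scalesSomeSqrt_of_dvd hm hζ him hfi hr hfζ dvd_rfl).map_eq_mul hsm

/-- Action of a Galois automorphism on `√m` for odd `m`: if `f ζ_m = ζ_m^r`
and `f i = ε·i`, then `f √m = ε^{(m−1)/2} (r/m) √m`, where `(r/m)` is the
Jacobi symbol. Here the cyclotomic field is pinned down inside `ℂ` by the
embedding `emb`. -/
theorem stmt_7 (m : ℕ) (hm : Odd m) (hmpos : 0 < m) (n : ℕ+)
    (ζ im sm : CyclotomicField n ℚ)
    (hζ : IsPrimitiveRoot ζ m) (him : im ^ 2 = -1) (hsm : sm ^ 2 = (m : CyclotomicField n ℚ))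
    (emb : CyclotomicField n ℚ →+* ℂ)
    (hembζ : emb ζ = Complex.exp (2 * Real.pi * Complex.I / m))
    (hembi : emb im = Complex.I)
    (hembs : emb sm = (Real.sqrt m : ℂ))
    (f : CyclotomicField n ℚ ≃ₐ[ℚ] CyclotomicField n ℚ)
    (r : ℤ) (hr : IsCoprime r (m : ℤ)) (hfζ : f ζ = ζ ^ r)
    (ε : ℤ) (hεpm : ε = 1 ∨ ε = -1) (hfi : f im = (ε : CyclotomicField n ℚ) * im) :
    f sm = (ε : CyclotomicField n ℚ) ^ ((m - 1) / 2) *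
      (jacobiSym r m : CyclotomicField n ℚ) * sm :=
  stmt_7_general m hm n ζ im sm hζ him hsm f r hr hfζ ε hfi
end

section
/- Let G_1,...,G_r be subgroups of S_n, each not contained in A_n, such that G = G_1·G_2···G_r is an internal direct product. Let g = g_1···g_r ∈ G ∩ A_n with g_j ∈ G_j. Then C_G(g) = C_{G∩A_n}(g) if and only if C_{G_j}(g_j) = C_{G_j ∩ A_n}(g_j) and g_j ∈ A_n for all j. -/
/-!
Identify `G = G_1 ⋯ G_r` with `∏ G_j` via the multiplication map, which is an isomorphism onto `G`
since the factors commute and the decomposition is unique. In the product, an element centralizes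
`(g_1, …, g_r)` iff each coordinate `c_j` centralizes `g_j`, so `C_G(g)` is generated by the
`C_{G_j}(g_j)`, and it lies in `A_n` iff each `C_{G_j}(g_j)` does. Since `g_j ∈ C_{G_j}(g_j)`,
the latter already forces `g_j ∈ A_n`.
-/

open Subgroup

theorem inf_eq_inf_inf_iff_le {L : Type*} [Lattice L] (a b c : L) :
    a ⊓ c = a ⊓ b ⊓ c ↔ a ⊓ c ≤ b := by
  rw [inf_right_comm, left_eq_inf]

namespace Subgroup

variable {M : Type*} [Group M]

theorem noncommPiCoprod_eq_prod_ofFn {r : ℕ} {G : Fin r → Subgroup M}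
    (hcomm : Pairwise fun i j => ∀ x y : M, x ∈ G i → y ∈ G j → Commute x y) (u : ∀ j, G j) :
    noncommPiCoprod hcomm u = (List.ofFn fun j => (u j : M)).prod := by
  simp only [noncommPiCoprod_apply, Finset.noncommProd, Fin.univ_val_map, Multiset.noncommProd_coe]

variable {ι : Type*} [Fintype ι] {G : ι → Subgroup M}
  {hcomm : Pairwise fun i j => ∀ x y : M, x ∈ G i → y ∈ G j → Commute x y}

theorem commute_noncommPiCoprod_iff (hinj : Function.Injective (noncommPiCoprod hcomm))
    {c g : ∀ j, G j} :
    Commute (noncommPiCoprod hcomm c) (noncommPiCoprod hcomm g) ↔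
      ∀ j, Commute (c j : M) (g j) := by
  simp only [commute_map_iff hinj, Pi.commute_iff, Submonoid.commute_coe_coe]

theorem iSup_inf_centralizer_le_iff [DecidableEq ι]
    (hinj : Function.Injective (noncommPiCoprod hcomm)) (A : Subgroup M) (g : ∀ j, G j) :
    (⨆ j, G j) ⊓ centralizer {noncommPiCoprod hcomm g} ≤ A ↔
      ∀ j, G j ⊓ centralizer {(g j : M)} ≤ A := by
  simp only [SetLike.le_def, mem_inf, mem_centralizer_singleton_iff, ← commute_iff_eq]
  constructor
  · intro h j x ⟨hx, hxg⟩
    have hsingle : ∀ i, Commute ((Pi.mulSingle j ⟨x, hx⟩ : ∀ i, G i) i : M) (g i) := by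
      intro i
      rcases eq_or_ne i j with rfl | hij
      · simpa using hxg
      · simp [Pi.mulSingle_eq_of_ne hij]
    have hxφ : noncommPiCoprod hcomm (Pi.mulSingle j ⟨x, hx⟩) = x := noncommPiCoprod_mulSingle _ _
    rw [← hxφ]
    exact h ⟨by rw [hxφ]; exact mem_iSup_of_mem j hx, (commute_noncommPiCoprod_iff hinj).2 hsingle⟩
  · rintro h _ ⟨hx, hxg⟩
    rw [← noncommPiCoprod_range (hcomm := hcomm)] at hx
    obtain ⟨c, rfl⟩ := hx
    have hc := (commute_noncommPiCoprod_iff hinj).1 hxg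
    rw [noncommPiCoprod_apply]
    exact noncommProd_mem _ _ fun j _ => h j ⟨(c j).2, hc j⟩

end Subgroup

theorem stmt_11_general (n r : ℕ) (G : Fin r → Subgroup (Equiv.Perm (Fin n)))
    (hcomm : ∀ i j, i ≠ j → ∀ x ∈ G i, ∀ y ∈ G j, Commute x y)
    (hdirect : ∀ g g' : Fin r → Equiv.Perm (Fin n),
      (∀ j, g j ∈ G j) → (∀ j, g' j ∈ G j) →
      ((List.ofFn g).prod) = ((List.ofFn g').prod) → g = g')
    (g : Fin r → Equiv.Perm (Fin n)) (hg : ∀ j, g j ∈ G j) :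
    ((⨆ j, G j) ⊓ Subgroup.centralizer {(List.ofFn g).prod}
        = ((⨆ j, G j) ⊓ alternatingGroup (Fin n)) ⊓ Subgroup.centralizer {(List.ofFn g).prod})
      ↔ ∀ j, g j ∈ alternatingGroup (Fin n) ∧
          G j ⊓ Subgroup.centralizer {g j}
            = (G j ⊓ alternatingGroup (Fin n)) ⊓ Subgroup.centralizer {g j} := by
  have hcomm' : Pairwise fun i j => ∀ x y, x ∈ G i → y ∈ G j → Commute x y :=
    fun i j hij x y hx hy => hcomm i j hij x hx y hy
  have hinj : Function.Injective (noncommPiCoprod hcomm') := fun u v huv => by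
    simp only [noncommPiCoprod_eq_prod_ofFn] at huv
    funext j
    exact Subtype.ext (congrFun (hdirect _ _ (fun j => (u j).2) (fun j => (v j).2) huv) j)
  have hprod : noncommPiCoprod hcomm' (fun j => ⟨g j, hg j⟩) = (List.ofFn g).prod :=
    noncommPiCoprod_eq_prod_ofFn hcomm' _
  simp only [inf_eq_inf_inf_iff_le, ← hprod, iSup_inf_centralizer_le_iff hinj]
  exact forall_congr' fun j => (and_iff_right_of_imp fun hle =>
    hle ⟨hg j, mem_centralizer_singleton_iff.2 rfl⟩).symm

/-- Split classes in an internal direct product of subgroups of `S_n`, none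
contained in `A_n`: the element `g = g_1⋯g_r` satisfies
`C_G(g) = C_{G∩A_n}(g)` iff each `g_j` lies in `A_n` and satisfies
`C_{G_j}(g_j) = C_{G_j∩A_n}(g_j)`. -/
theorem stmt_11 (n r : ℕ) (G : Fin r → Subgroup (Equiv.Perm (Fin n)))
    (hne : ∀ j, ¬ G j ≤ alternatingGroup (Fin n))
    (hcomm : ∀ i j, i ≠ j → ∀ x ∈ G i, ∀ y ∈ G j, Commute x y)
    (hdirect : ∀ g g' : Fin r → Equiv.Perm (Fin n),
      (∀ j, g j ∈ G j) → (∀ j, g' j ∈ G j) →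
      ((List.ofFn g).prod) = ((List.ofFn g').prod) → g = g')
    (g : Fin r → Equiv.Perm (Fin n)) (hg : ∀ j, g j ∈ G j)
    (hgA : ((List.ofFn g).prod) ∈ alternatingGroup (Fin n)) :
    ((⨆ j, G j) ⊓ Subgroup.centralizer {(List.ofFn g).prod}
        = ((⨆ j, G j) ⊓ alternatingGroup (Fin n)) ⊓ Subgroup.centralizer {(List.ofFn g).prod})
      ↔ ∀ j, g j ∈ alternatingGroup (Fin n) ∧
          G j ⊓ Subgroup.centralizer {g j}
            = (G j ⊓ alternatingGroup (Fin n)) ⊓ Subgroup.centralizer {g j} :=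
  stmt_11_general n r G hcomm hdirect g hg
end

section
/- Let p be an odd prime, a a p-cycle in S_p generating a Sylow p-subgroup, and Y = N_{S_p}(⟨a⟩). Then Y has exactly one conjugacy class contained in Y ∩ A_p whose Y-centralizer equals its (Y ∩ A_p)-centralizer, namely the class of a; equivalently, the class of a is the unique split class of Y. -/
/-!
Transport everything along a bijection `ZMod p ≃ Fin p` that carries `t ↦ t + 1` to `a`. Then `Y`
becomes the affine group `{t ↦ u * (w + t)}`. Translations are even, having odd order `p`, while
`t ↦ g * t` for a generator `g` of `(ZMod p)ˣ` is a `(p - 1)`-cycle, hence odd.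

If `x ∈ Y` is a nontrivial translation, i.e. `Y`-conjugate to `t ↦ t + 1`, everything commuting
with it is a translation, so `C_Y(x) ≤ A_p`. Otherwise `x` fixes some `t₀`, so it is the conjugate
of `t ↦ u * t` by the translation `t ↦ t + t₀`, and the same conjugate of `t ↦ g * t` is an odd
element of `Y` commuting with `x`.
-/

open Equiv Equiv.Perm Subgroup

theorem MonoidHom.eq_one_of_pow_eq_one_of_odd {G : Type*} [Group G] (f : G →* ℤˣ) {g : G}
    {n : ℕ} (hg : g ^ n = 1) (hn : Odd n) : f g = 1 := by
  rw [← pow_one (f g), ← Nat.odd_iff.mp hn, ← Int.units_pow_eq_pow_mod_two, ← map_pow, hg, map_one]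

theorem Subgroup.centralizer_conj_le {G : Type*} [Group G] {K : Subgroup G} [K.Normal] {c : G}
    (h : centralizer {c} ≤ K) (y : G) : centralizer {y * c * y⁻¹} ≤ K := by
  intro z hz
  have hzc : y⁻¹ * z * y ∈ centralizer {c} := by
    rw [mem_centralizer_singleton_iff] at hz ⊢
    calc y⁻¹ * z * y * c = y⁻¹ * (z * (y * c * y⁻¹)) * y := by group
      _ = y⁻¹ * ((y * c * y⁻¹) * z) * y := by rw [hz]
      _ = c * (y⁻¹ * z * y) := by group
  simpa [mul_assoc] using ‹K.Normal›.conj_mem _ (h hzc) y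

theorem Subgroup.map_equiv_normalizer_zpowers {G H : Type*} [Group G] [Group H] (f : G ≃* H)
    (c : G) :
    (normalizer (zpowers c : Set G)).map f.toMonoidHom = normalizer (zpowers (f c) : Set H) := by
  rw [map_equiv_normalizer_eq, MonoidHom.map_zpowers]
  rfl

theorem Subgroup.map_equiv_centralizer_singleton {G H : Type*} [Group G] [Group H] (f : G ≃* H)
    (x : G) : (centralizer {x}).map f.toMonoidHom = centralizer {f x} := by
  ext z
  obtain ⟨z, rfl⟩ := f.surjective z
  rw [mem_map_equiv, f.symm_apply_apply, mem_centralizer_singleton_iff,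
    mem_centralizer_singleton_iff, ← map_mul, ← map_mul, f.injective.eq_iff]

theorem MulEquiv.exists_mem_map_conj_eq_iff {G H : Type*} [Group G] [Group H] (f : G ≃* H)
    (K : Subgroup G) (c x : G) :
    (∃ y ∈ K.map f.toMonoidHom, y * f c * y⁻¹ = f x) ↔ ∃ y ∈ K, y * c * y⁻¹ = x := by
  simp only [mem_map, MulEquiv.coe_toMonoidHom, exists_exists_and_eq_and, ← map_inv, ← map_mul,
    f.injective.eq_iff]

theorem Equiv.map_permCongrHom_alternatingGroup {α β : Type*} [Fintype α] [DecidableEq α]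
    [Fintype β] [DecidableEq β] (e : α ≃ β) :
    (alternatingGroup α).map e.permCongrHom.toMonoidHom = alternatingGroup β := by
  ext z
  rw [mem_map_equiv, mem_alternatingGroup, mem_alternatingGroup, permCongrHom_symm,
    permCongrHom_coe, sign_permCongr]

theorem Equiv.Perm.IsCycle.permCongr {α β : Type*} {f : Perm α} (hf : f.IsCycle) (e : α ≃ β) :
    (e.permCongr f).IsCycle := by
  obtain ⟨x, hx, hsc⟩ := hf
  refine ⟨e x, by simpa using hx, fun y hy => ?_⟩
  obtain ⟨n, hn⟩ := hsc (y := e.symm y) (by simpa [eq_symm_apply] using hy)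
  refine ⟨n, ?_⟩
  rw [← permCongrHom_coe, ← map_zpow, permCongrHom_coe]
  simp [hn]

theorem Equiv.Perm.IsCycle.exists_permCongr_eq {α β : Type*} [Fintype α] [DecidableEq α]
    [Fintype β] [DecidableEq β] {f : Perm α} {g : Perm β} (hf : f.IsCycle) (hg : g.IsCycle)
    (h : f.support.card = g.support.card) (e₀ : α ≃ β) : ∃ e : α ≃ β, e.permCongr f = g := by
  have hf' := hf.permCongr e₀
  have hcard : (e₀.permCongr f).support.card = g.support.card := by
    rw [← hf'.orderOf, ← permCongrHom_coe, MulEquiv.orderOf_eq, hf.orderOf, h]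
  obtain ⟨k, hk⟩ := _root_.isConj_iff.mp (hf'.isConj hg hcard)
  exact ⟨e₀.trans k, by rw [← hk]; ext; simp⟩

section Affine

variable {R : Type*} [CommRing R]

local notation "μ" => MulAction.toPermHom Rˣ R

theorem toPermHom_units_conj_addLeft (u : Rˣ) (w : R) :
    μ u * Equiv.addLeft w * (μ u)⁻¹ = Equiv.addLeft (u * w) := by
  ext t
  simp [Units.smul_def]

theorem toPermHom_units_mul_addLeft_eq_conj {u : Rˣ} {w t : R} (ht : u * (w + t) = t) :
    μ u * Equiv.addLeft w = Equiv.addLeft t * μ u * (Equiv.addLeft t)⁻¹ := by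
  ext s
  simp only [MulAction.toPermHom_apply, coe_mul, coe_addLeft, Function.comp_apply,
    MulAction.toPerm_apply, smul_add, Units.smul_def, smul_eq_mul, Perm.inv_def, addLeft_symm,
    smul_neg]
  linear_combination ht

theorem exists_mul_add_eq_self_or_eq_one_and_ne_zero {F : Type*} [Field F] (u : Fˣ) (w : F) :
    (∃ t, u * (w + t) = t) ∨ (u = 1 ∧ w ≠ 0) := by
  by_cases hu : u = 1
  · by_cases hw : w = 0
    · exact .inl ⟨0, by simp [hw]⟩
    · exact .inr ⟨hu, hw⟩
  · have : (1 : F) - u ≠ 0 := sub_ne_zero.mpr fun h => hu (Units.ext h.symm)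
    refine .inl ⟨u * w / (1 - u), ?_⟩
    field_simp
    ring

end Affine

namespace ZMod

variable {n : ℕ}

theorem mem_zpowers_addLeft_one_iff {f : Perm (ZMod n)} :
    f ∈ zpowers (Equiv.addLeft 1) ↔ ∃ w, f = Equiv.addLeft w := by
  simp only [mem_zpowers_iff, Equiv.zsmul_addLeft, zsmul_one]
  constructor
  · rintro ⟨k, rfl⟩
    exact ⟨k, rfl⟩
  · rintro ⟨w, rfl⟩
    obtain ⟨k, rfl⟩ := intCast_surjective w
    exact ⟨k, rfl⟩

theorem eq_addLeft_of_commute_addLeft_one {z : Perm (ZMod n)} (h : Commute z (Equiv.addLeft 1)) :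
    z = Equiv.addLeft (z 0) := by
  ext t
  obtain ⟨k, rfl⟩ := intCast_surjective t
  have hk : Commute z (Equiv.addLeft (k : ZMod n)) := by
    simpa [Equiv.zsmul_addLeft] using h.zpow_right k
  simpa [add_comm] using congrArg (· 0) hk.eq

theorem sign_addLeft [NeZero n] (hn : Odd n) (w : ZMod n) : sign (Equiv.addLeft w) = 1 :=
  sign.eq_one_of_pow_eq_one_of_odd (by
    rw [Equiv.nsmul_addLeft, nsmul_eq_mul, natCast_self, zero_mul, Equiv.addLeft_zero]) hn

theorem support_addLeft_one [NeZero n] [Nontrivial (ZMod n)] :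
    (Equiv.addLeft (1 : ZMod n)).support = Finset.univ := by
  ext t
  simp

theorem isCycle_addLeft_one [NeZero n] [Nontrivial (ZMod n)] :
    (Equiv.addLeft (1 : ZMod n)).IsCycle := by
  refine ⟨0, by simp, fun t _ => ?_⟩
  obtain ⟨k, rfl⟩ := intCast_surjective t
  exact ⟨k, by simp⟩

theorem centralizer_addLeft_one_le_alternatingGroup [NeZero n] (hn : Odd n) :
    centralizer {Equiv.addLeft (1 : ZMod n)} ≤ alternatingGroup (ZMod n) := fun z hz => by
  rw [mem_alternatingGroup, eq_addLeft_of_commute_addLeft_one (mem_centralizer_singleton_iff.mp hz),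
    sign_addLeft hn]

variable {p : ℕ} [Fact p.Prime]

local notation "μ" => MulAction.toPermHom (ZMod p)ˣ (ZMod p)

/-- `Y` for the `p`-cycle `t ↦ t + 1`; by `mem_affineGroup_iff` it is the affine group
`AGL(1, p)`. -/
abbrev affineGroup (p : ℕ) : Subgroup (Perm (ZMod p)) :=
  normalizer (zpowers (Equiv.addLeft (1 : ZMod p)) : Set (Perm (ZMod p)))

theorem toPermHom_units_mem_affineGroup (u : (ZMod p)ˣ) : μ u ∈ affineGroup p :=
  mem_normalizer_fintype fun f hf => by
    obtain ⟨w, rfl⟩ := mem_zpowers_addLeft_one_iff.mp hf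
    rw [toPermHom_units_conj_addLeft]
    exact mem_zpowers_addLeft_one_iff.mpr ⟨_, rfl⟩

theorem mem_affineGroup_iff {y : Perm (ZMod p)} :
    y ∈ affineGroup p ↔ ∃ (u : (ZMod p)ˣ) (w : ZMod p), y = μ u * Equiv.addLeft w := by
  constructor
  · intro hy
    obtain ⟨m, hm⟩ := mem_zpowers_addLeft_one_iff.mp
      ((mem_normalizer_iff.mp hy _).mp (mem_zpowers (Equiv.addLeft 1)))
    have hm0 : m ≠ 0 := by
      rintro rfl
      rw [Equiv.addLeft_zero, conj_eq_one_iff] at hm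
      simpa using congrArg (· 0) hm
    set u := Units.mk0 m hm0
    have hconj : μ u * Equiv.addLeft 1 * (μ u)⁻¹ = y * Equiv.addLeft 1 * y⁻¹ := by
      rw [toPermHom_units_conj_addLeft, hm, Units.val_mk0, mul_one]
    have hz : Commute ((μ u)⁻¹ * y) (Equiv.addLeft 1) := mul_inv_eq_iff_eq_mul.mp <|
      calc (μ u)⁻¹ * y * Equiv.addLeft 1 * ((μ u)⁻¹ * y)⁻¹
          = (μ u)⁻¹ * (y * Equiv.addLeft 1 * y⁻¹) * μ u := by group
        _ = Equiv.addLeft 1 := by rw [← hconj]; group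
    exact ⟨u, _, by rw [← eq_addLeft_of_commute_addLeft_one hz, mul_inv_cancel_left]⟩
  · rintro ⟨u, w, rfl⟩
    exact mul_mem (toPermHom_units_mem_affineGroup u)
      (le_normalizer (mem_zpowers_addLeft_one_iff.mpr ⟨w, rfl⟩))

theorem exists_sign_toPermHom_units_eq_neg_one (hp2 : p ≠ 2) :
    ∃ g : (ZMod p)ˣ, sign (μ g) = -1 := by
  have hp := Fact.out (p := p.Prime)
  obtain ⟨g, hg⟩ := IsCyclic.exists_generator (α := (ZMod p)ˣ)
  have hg1 : (g : ZMod p) ≠ 1 := by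
    intro h
    have : Fact (2 < p) := ⟨hp.two_le.lt_of_ne' hp2⟩
    obtain ⟨k, hk⟩ := mem_zpowers_iff.mp (hg (-1))
    rw [Units.val_eq_one.mp h, one_zpow] at hk
    exact neg_one_ne_one (congrArg Units.val hk).symm
  have hfix : ∀ t : ZMod p, g • t = t ↔ t = 0 := fun t => by
    simp [Units.smul_def, mul_left_eq_self₀, hg1]
  have hsupp : (μ g).support = {0}ᶜ := by
    ext t
    simp [hfix]
  have hcycle : (μ g).IsCycle := by
    refine ⟨1, by simp [hfix], fun t ht => ?_⟩
    obtain ⟨k, hk⟩ := mem_zpowers_iff.mp (hg (Units.mk0 t ((hfix t).not.mp (by simpa using ht))))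
    exact ⟨k, by rw [← map_zpow, hk]; simp [Units.smul_def]⟩
  have heven : Even (p - 1) := Nat.Odd.sub_odd (hp.odd_of_ne_two hp2) odd_one
  refine ⟨g, ?_⟩
  rw [hcycle.sign, hsupp, Finset.card_compl, Finset.card_singleton, card, heven.neg_one_pow]

theorem affineGroup_inf_centralizer_le_alternatingGroup_iff (hp2 : p ≠ 2) {x : Perm (ZMod p)}
    (hx : x ∈ affineGroup p) :
    affineGroup p ⊓ centralizer {x} ≤ alternatingGroup (ZMod p) ↔
      ∃ y ∈ affineGroup p, y * Equiv.addLeft 1 * y⁻¹ = x := by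
  constructor
  · intro h
    obtain ⟨u, w, rfl⟩ := mem_affineGroup_iff.mp hx
    rcases exists_mul_add_eq_self_or_eq_one_and_ne_zero u w with ⟨t, ht⟩ | ⟨rfl, hw⟩
    · obtain ⟨g, hg⟩ := exists_sign_toPermHom_units_eq_neg_one hp2
      have hT : Equiv.addLeft t ∈ affineGroup p :=
        le_normalizer (mem_zpowers_addLeft_one_iff.mpr ⟨t, rfl⟩)
      have hsx : Equiv.addLeft t * μ g * (Equiv.addLeft t)⁻¹ ∈
          centralizer {μ u * Equiv.addLeft w} := by
        rw [mem_centralizer_singleton_iff, toPermHom_units_mul_addLeft_eq_conj ht]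
        exact ((Commute.all g u).map μ).map (MulAut.conj (Equiv.addLeft t))
      have hs := h (mem_inf.mpr
        ⟨mul_mem (mul_mem hT (toPermHom_units_mem_affineGroup g)) (inv_mem hT), hsx⟩)
      rw [mem_alternatingGroup, map_mul, map_mul, map_inv, mul_inv_cancel_comm, hg] at hs
      exact absurd hs (by decide)
    · exact ⟨μ (Units.mk0 w hw), toPermHom_units_mem_affineGroup _, by
        rw [toPermHom_units_conj_addLeft, map_one, one_mul]; simp⟩
  · rintro ⟨y, -, rfl⟩
    exact inf_le_right.trans <| centralizer_conj_le
      (centralizer_addLeft_one_le_alternatingGroup (Fact.out (p := p.Prime) |>.odd_of_ne_two hp2)) y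

end ZMod

theorem stmt_13_general (p : ℕ) (hp : p.Prime) (hp2 : p ≠ 2)
    (a : Equiv.Perm (Fin p)) (ha : a.IsCycle) (hsupp : a.support.card = p)
    (x : Equiv.Perm (Fin p))
    (hx : x ∈ Subgroup.normalizer ((Subgroup.zpowers a : Subgroup (Equiv.Perm (Fin p))) : Set (Equiv.Perm (Fin p)))) :
    (Subgroup.normalizer ((Subgroup.zpowers a : Subgroup (Equiv.Perm (Fin p))) : Set (Equiv.Perm (Fin p))) ⊓ Subgroup.centralizer {x}
        = (Subgroup.normalizer ((Subgroup.zpowers a : Subgroup (Equiv.Perm (Fin p))) : Set (Equiv.Perm (Fin p))) ⊓ alternatingGroup (Fin p)) ⊓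
            Subgroup.centralizer {x})
      ↔ ∃ y ∈ Subgroup.normalizer ((Subgroup.zpowers a : Subgroup (Equiv.Perm (Fin p))) : Set (Equiv.Perm (Fin p))), y * a * y⁻¹ = x := by
  have := Fact.mk hp
  obtain ⟨e, rfl⟩ := (ZMod.isCycle_addLeft_one (n := p)).exists_permCongr_eq ha
    (by rw [ZMod.support_addLeft_one, Finset.card_univ, ZMod.card, hsupp]) (ZMod.finEquiv p).symm
  rw [← permCongrHom_coe] at hx ⊢
  obtain ⟨x, rfl⟩ := e.permCongrHom.surjective x
  rw [← map_equiv_normalizer_zpowers, mem_map_equiv, MulEquiv.symm_apply_apply] at hx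
  -- `C_Y(x) = C_{Y ∩ A_p}(x)` says `C_Y(x) ≤ A_p`; then pull everything back along `e`
  rw [inf_right_comm _ (alternatingGroup _), left_eq_inf, ← map_equiv_normalizer_zpowers,
    ← map_equiv_centralizer_singleton, ← e.map_permCongrHom_alternatingGroup,
    ← map_inf_eq _ _ _ e.permCongrHom.injective,
    map_le_map_iff_of_injective e.permCongrHom.injective,
    ZMod.affineGroup_inf_centralizer_le_alternatingGroup_iff hp2 hx,
    e.permCongrHom.exists_mem_map_conj_eq_iff]

/-- The normalizer `Y` of `⟨a⟩`, `a` a `p`-cycle in `S_p` (`p` an odd prime),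
has exactly one split class contained in `Y ∩ A_p`, namely the `Y`-class of
`a`: for `x ∈ Y ∩ A_p`, `C_Y(x) = C_{Y∩A_p}(x)` iff `x` is `Y`-conjugate
to `a`. -/
theorem stmt_13 (p : ℕ) (hp : p.Prime) (hp2 : p ≠ 2)
    (a : Equiv.Perm (Fin p)) (ha : a.IsCycle) (hsupp : a.support.card = p)
    (x : Equiv.Perm (Fin p))
    (hx : x ∈ Subgroup.normalizer ((Subgroup.zpowers a : Subgroup (Equiv.Perm (Fin p))) : Set (Equiv.Perm (Fin p))))
    (hxA : x ∈ alternatingGroup (Fin p)) :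
    (Subgroup.normalizer ((Subgroup.zpowers a : Subgroup (Equiv.Perm (Fin p))) : Set (Equiv.Perm (Fin p))) ⊓ Subgroup.centralizer {x}
        = (Subgroup.normalizer ((Subgroup.zpowers a : Subgroup (Equiv.Perm (Fin p))) : Set (Equiv.Perm (Fin p))) ⊓ alternatingGroup (Fin p)) ⊓
            Subgroup.centralizer {x})
      ↔ ∃ y ∈ Subgroup.normalizer ((Subgroup.zpowers a : Subgroup (Equiv.Perm (Fin p))) : Set (Equiv.Perm (Fin p))), y * a * y⁻¹ = x :=
  stmt_13_general p hp hp2 a ha hsupp x hx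
end

section
/- Let p be an odd prime and λ a symmetric partition of n with empty p-core such that the middle component λ_{(p−1)/2} of its p-quotient is empty. Then the diagonal hook lengths of λ come in pairs (d, d*) with d + d* ≡ 0 (mod 2p); more precisely d = 2(xp + γ) + 1 and d* = 2((−x*−1)p + (p−1−γ)) + 1 for some integers x, x* and 0 ≤ γ ≤ p−1, γ ≠ (p−1)/2, so that d + d* = 2p(x − x*). In particular the number of diagonal hooks of λ is even and n ≡ 0 mod 2p. -/
open Classical in
/-- The partition sequence of a partition, encoded via its parts
`f 0 ≥ f 1 ≥ ⋯`: position `u ∈ ℤ` carries a `0` exactly when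
`u = f i − (i+1)` for some `i`. -/
noncomputable def partitionSeq (f : ℕ → ℕ) (u : ℤ) : ℕ :=
  if ∃ i : ℕ, (f i : ℤ) - (i + 1) = u then 0 else 1

/-- The conjugate partition: `λ*_{i+1}` is the number of parts `> i`. -/
noncomputable def conjPartition (f : ℕ → ℕ) (i : ℕ) : ℕ :=
  Nat.card {j : ℕ | i < f j}

/-!
A bead of the abacus of `λ` at a position `u ≥ 0` is a diagonal hook of length `2u + 1`, and
self-conjugacy means that there is a bead at `u` exactly when there is none at `-1 - u`. So the
empty `p`-core condition on runner `γ` (as many beads in the nonnegative rows as gaps in the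
negative rows) says that runners `γ` and `p - 1 - γ` carry equally many nonnegative beads.
Matching the `k`-th bead of runner `γ` with the `k`-th bead of runner `p - 1 - γ` gives an
involution; it has no fixed point because the middle runner `(p - 1) / 2` carries no nonnegative
bead, and matched positions satisfy `u + v ≡ -1 (mod p)`, i.e. `(2u + 1) + (2v + 1) ≡ 0 (mod 2p)`.
As `n` is the sum of the diagonal hook lengths, summing over the pairs gives `n ≡ 0 (mod 2p)`.
-/

open Finset

lemma sum_modEq_zero_of_involution {α : Type*} {S : Finset α} {σ : α → α} {g : α → ℕ} {m : ℕ}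
    (hσS : ∀ u ∈ S, σ u ∈ S) (hσσ : ∀ u ∈ S, σ (σ u) = u) (hne : ∀ u ∈ S, σ u ≠ u)
    (hg : ∀ u ∈ S, g u + g (σ u) ≡ 0 [MOD m]) : ∑ u ∈ S, g u ≡ 0 [MOD m] := by
  rw [← ZMod.natCast_eq_natCast_iff, Nat.cast_sum, Nat.cast_zero]
  refine sum_involution (fun u _ => σ u) (fun u hu => ?_) (fun u hu _ => hne u hu) hσS hσσ
  rw [← Nat.cast_add, ← Nat.cast_zero, ZMod.natCast_eq_natCast_iff]
  exact hg u hu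

lemma even_card_of_involution {α : Type*} {S : Finset α} {σ : α → α}
    (hσS : ∀ u ∈ S, σ u ∈ S) (hσσ : ∀ u ∈ S, σ (σ u) = u) (hne : ∀ u ∈ S, σ u ≠ u) :
    Even #S := by
  rw [Nat.even_iff, card_eq_sum_ones]
  exact sum_modEq_zero_of_involution hσS hσσ hne fun _ _ => rfl

lemma two_mul_add_one_add_modEq_zero {p a b : ℕ} (hp : 0 < p) (h : b % p = p - 1 - a % p) :
    (2 * a + 1) + (2 * b + 1) ≡ 0 [MOD 2 * p] := by
  have ha := Nat.div_add_mod a p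
  have hb := Nat.div_add_mod b p
  have hlt := Nat.mod_lt a hp
  refine Nat.modEq_zero_iff_dvd.2 ⟨a / p + b / p + 1, ?_⟩
  have : 2 * p * (a / p + b / p + 1) = 2 * (p * (a / p)) + 2 * (p * (b / p)) + 2 * p := by ring
  omega

lemma exists_eq_two_mul_add_one {p u v : ℕ} (hp : 0 < p) (h : v % p = p - 1 - u % p) :
    ∃ x xs : ℤ, (2 * u + 1 : ℤ) = 2 * (x * p + (u % p : ℕ)) + 1 ∧
      (2 * v + 1 : ℤ) = 2 * ((-xs - 1) * p + ((p : ℤ) - 1 - (u % p : ℕ))) + 1 := by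
  refine ⟨(u / p : ℕ), -(v / p : ℕ) - 1, ?_, ?_⟩
  · have : ((u / p : ℕ) : ℤ) * p + (u % p : ℕ) = u := by exact_mod_cast Nat.div_add_mod' u p
    omega
  · have hv : ((v / p : ℕ) : ℤ) * p + (v % p : ℕ) = v := by exact_mod_cast Nat.div_add_mod' v p
    have := Nat.mod_lt u hp
    rw [h] at hv
    rw [show -(-((v / p : ℕ) : ℤ) - 1) - 1 = (v / p : ℕ) by ring]
    omega

noncomputable def rankMatch (s t : Finset ℕ) (u : ℕ) : ℕ :=
  Nat.nth (· ∈ t) (Nat.count (· ∈ s) u)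

lemma count_lt_card_of_mem {s : Finset ℕ} {u : ℕ} (hu : u ∈ s) : Nat.count (· ∈ s) u < #s := by
  simpa using Nat.count_lt_card s.finite_toSet hu

lemma rankMatch_mem {s t : Finset ℕ} (hst : #s = #t) {u : ℕ} (hu : u ∈ s) :
    rankMatch s t u ∈ t :=
  Nat.nth_mem_of_lt_card t.finite_toSet (by simpa [hst] using count_lt_card_of_mem hu)

lemma rankMatch_rankMatch {s t : Finset ℕ} (hst : #s = #t) {u : ℕ} (hu : u ∈ s) :
    rankMatch t s (rankMatch s t u) = u := by
  rw [rankMatch, rankMatch, Nat.count_nth_of_lt_card_finite (p := (· ∈ t)) t.finite_toSet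
    (by simpa [hst] using count_lt_card_of_mem hu)]
  exact Nat.nth_count hu

lemma exists_involution_mod_eq_sub {p : ℕ} (hp : 0 < p) (S : Finset ℕ)
    (hS : ∀ γ < p, #{u ∈ S | u % p = γ} = #{u ∈ S | u % p = p - 1 - γ}) :
    ∃ σ : ℕ → ℕ, ∀ u ∈ S, σ u ∈ S ∧ σ (σ u) = u ∧ σ u % p = p - 1 - u % p := by
  refine ⟨fun u => rankMatch {v ∈ S | v % p = u % p} {v ∈ S | v % p = p - 1 - u % p} u,
    fun u hu => ?_⟩
  have hγ := Nat.mod_lt u hp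
  have hmem : u ∈ {v ∈ S | v % p = u % p} := mem_filter.2 ⟨hu, rfl⟩
  obtain ⟨hσS, hσmod⟩ := mem_filter.1 (rankMatch_mem (hS _ hγ) hmem)
  refine ⟨hσS, ?_, hσmod⟩
  dsimp only
  rw [hσmod, show p - 1 - (p - 1 - u % p) = u % p by omega]
  exact rankMatch_rankMatch (hS _ hγ) hmem

lemma partitionSeq_eq_zero_iff (f : ℕ → ℕ) (u : ℤ) :
    partitionSeq f u = 0 ↔ ∃ i : ℕ, (f i : ℤ) - (i + 1) = u := by
  unfold partitionSeq; split_ifs with h <;> simp [h]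

lemma partitionSeq_eq_one_iff (f : ℕ → ℕ) (u : ℤ) :
    partitionSeq f u = 1 ↔ partitionSeq f u ≠ 0 := by
  unfold partitionSeq; split_ifs <;> simp

section

variable {f : ℕ → ℕ} {p : ℕ}

lemma setOf_lt_apply_eq_Iio_find (hmono : Antitone f) {j : ℕ} (h : ∃ i, f i ≤ j) :
    {i | j < f i} = Set.Iio (Nat.find h) := by
  ext i
  simp only [Set.mem_ofPred_eq, Set.mem_Iio, Nat.lt_find_iff, not_le]
  exact ⟨fun hi m hm => hi.trans_le (hmono hm), fun hi => hi i le_rfl⟩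

lemma lt_conjPartition_iff (hmono : Antitone f) {N : ℕ} (hfin : ∀ i, N ≤ i → f i = 0)
    (i j : ℕ) : i < conjPartition f j ↔ j < f i := by
  have h : ∃ i, f i ≤ j := ⟨N, by simp [hfin N le_rfl]⟩
  have hset := setOf_lt_apply_eq_Iio_find hmono h
  rw [conjPartition, hset, Nat.card_coe_set_eq, Set.ncard_Iio_nat, ← Set.mem_Iio, ← hset]
  rfl

lemma lt_apply_comm_of_conjPartition_eq (hmono : Antitone f) {N : ℕ}
    (hfin : ∀ i, N ≤ i → f i = 0) (hsym : conjPartition f = f) (i j : ℕ) : j < f i ↔ i < f j := by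
  rw [← lt_conjPartition_iff hmono hfin, hsym]

lemma partitionSeq_eq_zero_iff_neg_one_sub (hmono : Antitone f)
    (hconj : ∀ i j, j < f i ↔ i < f j) (u : ℤ) :
    partitionSeq f u = 0 ↔ partitionSeq f (-1 - u) ≠ 0 := by
  classical
  simp only [ne_eq, partitionSeq_eq_zero_iff, not_exists]
  constructor
  · rintro ⟨i, rfl⟩ j hj
    have := hconj i j
    omega
  · intro h
    by_contra hu
    rw [not_exists] at hu
    -- With `k` the first row such that `f k ≤ u + k`, column `u + k` has length exactly `k`,
    -- which puts a bead at `-1 - u`.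
    have hex : ∃ k : ℕ, (f k : ℤ) ≤ u + k := ⟨f 0 + u.natAbs, by
      have := hmono (Nat.zero_le (f 0 + u.natAbs))
      have := (hconj (f 0 + u.natAbs) 0).not
      omega⟩
    set k := Nat.find hex
    have hk : (f k : ℤ) ≤ u + k := Nat.find_spec hex
    have hbefore : ∀ i < k, u + k < f i := fun i hi => by
      have : ¬ (f (k - 1) : ℤ) ≤ u + (k - 1 : ℕ) := Nat.find_min hex (by omega)
      have := hu (k - 1)
      have := hmono (show i ≤ k - 1 by omega)
      omega
    have hlen : f (u + k).toNat = k := eq_of_forall_lt_iff fun i => by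
      rw [← hconj]
      constructor
      · intro hi
        by_contra hik
        have := hmono (not_lt.1 hik)
        omega
      · intro hi
        have := hbefore i hi
        omega
    exact h (u + k).toNat (by omega)

noncomputable def diagBeads (f : ℕ → ℕ) : Finset ℕ := {u ∈ range (f 0) | partitionSeq f u = 0}

lemma mem_diagBeads (hmono : Antitone f) {u : ℕ} :
    u ∈ diagBeads f ↔ partitionSeq f u = 0 := by
  rw [diagBeads, mem_filter, mem_range, and_iff_right_iff_imp, partitionSeq_eq_zero_iff]
  rintro ⟨i, hi⟩
  have := hmono (Nat.zero_le i)
  omega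

-- Off the diagonal (`f i ≤ i`) both summands vanish by truncated subtraction. The cells strictly
-- left of the diagonal are counted column by column, and by self-conjugacy columns are rows.
lemma sum_eq_sum_arm_add_leg (hconj : ∀ i j, j < f i ↔ i < f j) {N : ℕ}
    (hfin : ∀ i, N ≤ i → f i = 0) :
    ∑ i ∈ range N, f i = ∑ i ∈ range N, ((f i - i) + (f i - (i + 1))) := by
  have hrow : ∀ a ∈ range N, f a = (f a - a) + #{b ∈ range N | b < a ∧ b < f a} := by
    intro a ha
    rw [mem_range] at ha
    have : {b ∈ range N | b < a ∧ b < f a} = range (min a (f a)) := by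
      ext b; simp only [mem_filter, mem_range, lt_min_iff]; omega
    rw [this, card_range]
    omega
  have hcol : ∀ b ∈ range N, #{a ∈ range N | b < a ∧ a < f b} = f b - (b + 1) := by
    intro b _
    have hbN : f b ≤ N := by
      by_contra h
      have := (hconj N b).2 (by omega)
      simp [hfin N le_rfl] at this
    have : {a ∈ range N | b < a ∧ a < f b} = Ioo b (f b) := by
      ext a; simp only [mem_filter, mem_range, mem_Ioo]; omega
    rw [this, Nat.card_Ioo]
    omega
  calc ∑ a ∈ range N, f a
      = ∑ a ∈ range N, ((f a - a) + #{b ∈ range N | b < a ∧ b < f a}) := sum_congr rfl hrow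
    _ = ∑ a ∈ range N, (f a - a) + ∑ b ∈ range N, #{a ∈ range N | b < a ∧ a < f b} := by
        simp only [sum_add_distrib, card_filter]
        rw [sum_comm]
        exact congrArg _ <| sum_congr rfl fun b _ => sum_congr rfl fun a _ => by
          simp only [hconj a b]
    _ = ∑ i ∈ range N, ((f i - i) + (f i - (i + 1))) := by
        rw [sum_congr rfl hcol, sum_add_distrib]

lemma sum_arm_add_leg_eq_sum_diagBeads (hmono : Antitone f) {N : ℕ}
    (hfin : ∀ i, N ≤ i → f i = 0) :
    ∑ i ∈ range N, ((f i - i) + (f i - (i + 1))) = ∑ u ∈ diagBeads f, (2 * u + 1) := by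
  refine sum_bij_ne_zero (fun i _ _ => f i - (i + 1)) ?_ ?_ ?_ ?_
  · intro i _ hi
    rw [mem_diagBeads hmono, partitionSeq_eq_zero_iff]
    exact ⟨i, by omega⟩
  · intro i _ hi j _ hj hij
    by_contra hne
    rcases Nat.lt_or_gt_of_ne hne with h | h
    · have := hmono h.le; omega
    · have := hmono h.le; omega
  · intro u hu _
    obtain ⟨i, hi⟩ := (partitionSeq_eq_zero_iff f u).1 ((mem_diagBeads hmono).1 hu)
    have hiN : i < N := by
      by_contra h
      have := hfin i (by omega)
      omega
    exact ⟨i, mem_range.2 hiN, by omega, by omega⟩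
  · intro i _ hi
    omega

lemma sum_range_eq_sum_diagBeads (hmono : Antitone f) (hconj : ∀ i j, j < f i ↔ i < f j) {N : ℕ}
    (hfin : ∀ i, N ≤ i → f i = 0) :
    ∑ i ∈ range N, f i = ∑ u ∈ diagBeads f, (2 * u + 1) := by
  rw [sum_eq_sum_arm_add_leg hconj hfin, sum_arm_add_leg_eq_sum_diagBeads hmono hfin]

lemma card_setOf_partitionSeq_mul_add_eq_zero (hmono : Antitone f) (hp : 0 < p) {γ : ℕ}
    (hγ : γ < p) :
    Nat.card {j : ℕ | partitionSeq f (j * p + γ) = 0} = #{u ∈ diagBeads f | u % p = γ} := by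
  have hinj : Function.Injective fun j : ℕ => j * p + γ := fun a b h =>
    Nat.eq_of_mul_eq_mul_right hp (by simpa using h)
  rw [Nat.card_coe_set_eq, ← Set.ncard_image_of_injective _ hinj, ← Set.ncard_coe_finset]
  congr 1
  ext u
  simp only [Set.mem_image, Set.mem_ofPred_eq, coe_filter, mem_diagBeads hmono]
  constructor
  · rintro ⟨j, hj, rfl⟩
    refine ⟨by exact_mod_cast hj, ?_⟩
    rw [Nat.mul_comm, Nat.mul_add_mod, Nat.mod_eq_of_lt hγ]
  · rintro ⟨hu, rfl⟩
    exact ⟨u / p, by exact_mod_cast (Nat.div_add_mod' u p).symm ▸ hu, Nat.div_add_mod' u p⟩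

lemma card_diagBeads_mod_eq_card_mod_sub (hmono : Antitone f) (hconj : ∀ i j, j < f i ↔ i < f j)
    (hp : 0 < p) {γ : ℕ} (hγ : γ < p)
    (hcore : Nat.card {j : ℕ | partitionSeq f ((j : ℤ) * p + γ) = 0}
      = Nat.card {j : ℕ | partitionSeq f ((-1 - (j : ℤ)) * p + γ) = 1}) :
    #{u ∈ diagBeads f | u % p = γ} = #{u ∈ diagBeads f | u % p = p - 1 - γ} := by
  rw [← card_setOf_partitionSeq_mul_add_eq_zero hmono hp hγ,
    ← card_setOf_partitionSeq_mul_add_eq_zero hmono hp (by omega : p - 1 - γ < p), hcore]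
  congr 2
  ext j
  have : (-1 - (j : ℤ)) * p + γ = -1 - (j * p + ((p - 1 - γ : ℕ) : ℤ)) := by
    push_cast [Nat.sub_sub, Nat.cast_sub (by omega : 1 + γ ≤ p)]; ring
  rw [Set.mem_ofPred_eq, Set.mem_ofPred_eq, this, partitionSeq_eq_one_iff,
    ← partitionSeq_eq_zero_iff_neg_one_sub hmono hconj]

lemma mod_ne_of_forall_partitionSeq_ne_zero (hmono : Antitone f) {γ u : ℕ}
    (hu : u ∈ diagBeads f) (hγ : ∀ j : ℕ, partitionSeq f (j * p + γ) ≠ 0) : u % p ≠ γ := by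
  rintro rfl
  have := hγ (u / p)
  rw [← Nat.cast_mul, ← Nat.cast_add, Nat.div_add_mod'] at this
  exact this ((mem_diagBeads hmono).1 hu)

end

theorem stmt_17_general (p : ℕ) (hpodd : Odd p)
    (f : ℕ → ℕ) (hmono : Antitone f) (N : ℕ)
    (hfin : ∀ i, N ≤ i → f i = 0) (hsym : conjPartition f = f)
    (hcore : ∀ γ : ℕ, γ < p →
      Nat.card {j : ℕ | partitionSeq f ((j : ℤ) * p + γ) = 0}
        = Nat.card {j : ℕ | partitionSeq f ((-1 - (j : ℤ)) * p + γ) = 1})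
    (hmid : ∀ j : ℤ, partitionSeq f (j * p + ((p - 1) / 2 : ℕ))
        = if j < 0 then 0 else 1) :
    ∃ σ : ℕ → ℕ,
      (∀ u : ℕ, partitionSeq f (u : ℤ) = 0 → partitionSeq f (σ u : ℤ) = 0) ∧
      (∀ u : ℕ, partitionSeq f (u : ℤ) = 0 → σ (σ u) = u) ∧
      (∀ u : ℕ, partitionSeq f (u : ℤ) = 0 → σ u ≠ u) ∧
      (∀ u : ℕ, partitionSeq f (u : ℤ) = 0 →
        (2 * u + 1) + (2 * σ u + 1) ≡ 0 [MOD 2 * p]) ∧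
      (∀ u : ℕ, partitionSeq f (u : ℤ) = 0 →
        ∃ γ : ℕ, γ < p ∧ γ ≠ (p - 1) / 2 ∧
          ∃ x xs : ℤ, (2 * u + 1 : ℤ) = 2 * (x * p + γ) + 1 ∧
            (2 * (σ u : ℤ) + 1) = 2 * ((-xs - 1) * p + ((p : ℤ) - 1 - γ)) + 1) ∧
      Even (Nat.card {u : ℕ | partitionSeq f (u : ℤ) = 0}) ∧
      (∑ i ∈ Finset.range N, f i) ≡ 0 [MOD 2 * p] := by
  have hp : 0 < p := hpodd.pos
  have hconj := lt_apply_comm_of_conjPartition_eq hmono hfin hsym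
  obtain ⟨σ, hσ⟩ := exists_involution_mod_eq_sub hp (diagBeads f) fun γ hγ =>
    card_diagBeads_mod_eq_card_mod_sub hmono hconj hp hγ (hcore γ hγ)
  have hmod u (hu : u ∈ diagBeads f) : u % p ≠ (p - 1) / 2 :=
    mod_ne_of_forall_partitionSeq_ne_zero hmono hu fun j => by rw [hmid]; simp
  have hne u (hu : u ∈ diagBeads f) : σ u ≠ u := fun h => by
    have := (hσ u hu).2.2
    rw [h] at this
    obtain ⟨r, rfl⟩ := hpodd
    have := hmod u hu
    omega
  have hpair u (hu : u ∈ diagBeads f) : (2 * u + 1) + (2 * σ u + 1) ≡ 0 [MOD 2 * p] :=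
    two_mul_add_one_add_modEq_zero hp (hσ u hu).2.2
  simp only [← mem_diagBeads hmono]
  refine ⟨σ, fun u hu => (hσ u hu).1, fun u hu => (hσ u hu).2.1, hne, hpair,
    fun u hu => ⟨u % p, Nat.mod_lt u hp, hmod u hu, exists_eq_two_mul_add_one hp (hσ u hu).2.2⟩,
    ?_, ?_⟩
  · rw [setOfPred_mem, Nat.card_coe_set_eq, Set.ncard_coe_finset]
    exact even_card_of_involution (fun u hu => (hσ u hu).1) (fun u hu => (hσ u hu).2.1) hne
  · rw [sum_range_eq_sum_diagBeads hmono hconj hfin]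
    exact sum_modEq_zero_of_involution (fun u hu => (hσ u hu).1) (fun u hu => (hσ u hu).2.1)
      hne hpair

/-- For a symmetric partition `λ` of `n` with empty `p`-core (each abacus
runner is balanced) and empty middle `p`-quotient component (the runner
`(p−1)/2` carries the empty partition), the diagonal hooks — given by the
positions `u` with `l_u = 0`, of length `2u+1` — pair off by a
fixed-point-free involution `σ` with `(2u+1) + (2σ(u)+1) ≡ 0 (mod 2p)`;
each pair has the precise form `d = 2(xp+γ)+1`,
`d* = 2((−x*−1)p+(p−1−γ))+1` with `γ ≠ (p−1)/2`. In particular the number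
of diagonal hooks is even and `n ≡ 0 (mod 2p)`. -/
theorem stmt_17 (p : ℕ) (hp : p.Prime) (hpodd : Odd p)
    (f : ℕ → ℕ) (hmono : Antitone f) (N : ℕ)
    (hfin : ∀ i, N ≤ i → f i = 0) (hsym : conjPartition f = f)
    (hcore : ∀ γ : ℕ, γ < p →
      Nat.card {j : ℕ | partitionSeq f ((j : ℤ) * p + γ) = 0}
        = Nat.card {j : ℕ | partitionSeq f ((-1 - (j : ℤ)) * p + γ) = 1})
    (hmid : ∀ j : ℤ, partitionSeq f (j * p + ((p - 1) / 2 : ℕ))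
        = if j < 0 then 0 else 1) :
    ∃ σ : ℕ → ℕ,
      (∀ u : ℕ, partitionSeq f (u : ℤ) = 0 → partitionSeq f (σ u : ℤ) = 0) ∧
      (∀ u : ℕ, partitionSeq f (u : ℤ) = 0 → σ (σ u) = u) ∧
      (∀ u : ℕ, partitionSeq f (u : ℤ) = 0 → σ u ≠ u) ∧
      (∀ u : ℕ, partitionSeq f (u : ℤ) = 0 →
        (2 * u + 1) + (2 * σ u + 1) ≡ 0 [MOD 2 * p]) ∧
      (∀ u : ℕ, partitionSeq f (u : ℤ) = 0 →
        ∃ γ : ℕ, γ < p ∧ γ ≠ (p - 1) / 2 ∧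
          ∃ x xs : ℤ, (2 * u + 1 : ℤ) = 2 * (x * p + γ) + 1 ∧
            (2 * (σ u : ℤ) + 1) = 2 * ((-xs - 1) * p + ((p : ℤ) - 1 - γ)) + 1) ∧
      Even (Nat.card {u : ℕ | partitionSeq f (u : ℤ) = 0}) ∧
      (∑ i ∈ Finset.range N, f i) ≡ 0 [MOD 2 * p] :=
  stmt_17_general p hpodd f hmono N hfin hsym hcore hmid
end

section
/- Let p be an odd prime and let λ be a symmetric partition of n all of whose diagonal hook lengths, grouped into pairs {t, t*} with t = p^i·u and t* = p^i·(w·p − u) where u is odd coprime to p and w is even (regular partition structure). Let d = Π_{h diagonal hook of λ} h and let d_λ be the number of diagonal hooks. Then Π over all pairs of u(wp − u) ≡ (−1)^{(n − d_λ)/2} (mod 4). -/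
/-- For a symmetric partition of `n` whose diagonal hook lengths pair off
as `{p^{i_j}·u_j, p^{i_j}·(w_j·p − u_j)}` with `u_j` odd coprime to `p`
and `w_j` even (so `n` is the sum of all `2s` hook lengths and
`d_λ = 2s`), the product `Π_j u_j·(w_j·p − u_j)` is congruent to
`(−1)^{(n − d_λ)/2}` modulo 4. -/
theorem stmt_18 (p : ℕ) (hp : p.Prime) (hpodd : Odd p) (s : ℕ)
    (e u w : Fin s → ℕ)
    (hu : ∀ j, Odd (u j)) (hcop : ∀ j, Nat.Coprime (u j) p)
    (hw : ∀ j, Even (w j)) (hupos : ∀ j, 0 < u j) (hlt : ∀ j, u j < w j * p) :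
    (∏ j : Fin s, ((u j : ℤ) * ((w j : ℤ) * p - u j)))
      ≡ (-1 : ℤ) ^
          (((∑ j : Fin s, (p ^ e j * u j + p ^ e j * (w j * p - u j))) - 2 * s) / 2)
        [ZMOD 4] := by
  have ppos : 0 < p := hp.pos
  set v : Fin s → ℕ := fun j => w j / 2 with hv
  have hwv : ∀ j, w j = 2 * v j := by
    intro j
    obtain ⟨c, hc⟩ := hw j
    simp only [hv, hc]
    omega
  set a : Fin s → ℕ := fun j => p ^ (e j + 1) * v j with ha
  have hvpos : ∀ j, 0 < v j := by
    intro j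
    by_contra h
    have hv0 : v j = 0 := by omega
    have := hlt j
    rw [hwv j, hv0] at this
    simp at this
  have hapos : ∀ j, 0 < a j := fun j =>
    Nat.mul_pos (pow_pos ppos _) (hvpos j)
  -- each summand equals 2 * a j
  have hterm : ∀ j, p ^ e j * u j + p ^ e j * (w j * p - u j) = 2 * a j := by
    intro j
    rw [← Nat.mul_add, Nat.add_sub_cancel' (hlt j).le, ha, hwv j]
    ring
  have hsum : (∑ j : Fin s, (p ^ e j * u j + p ^ e j * (w j * p - u j)))
      = 2 * ∑ j : Fin s, a j := by
    rw [Finset.mul_sum]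
    exact Finset.sum_congr rfl fun j _ => hterm j
  have hsub : ∑ j : Fin s, (a j - 1) + s = ∑ j : Fin s, a j := by
    calc ∑ j : Fin s, (a j - 1) + s = ∑ j : Fin s, ((a j - 1) + 1) := by
          rw [Finset.sum_add_distrib]
          simp
      _ = ∑ j : Fin s, a j := Finset.sum_congr rfl fun j _ => by
          have := hapos j; omega
  have hN : ((∑ j : Fin s, (p ^ e j * u j + p ^ e j * (w j * p - u j))) - 2 * s) / 2
      = ∑ j : Fin s, (a j - 1) := by
    rw [hsum]
    omega
  -- per-index congruence
  have key : ∀ j, ((u j : ℤ) * ((w j : ℤ) * p - u j)) ≡ (-1 : ℤ) ^ (a j - 1) [ZMOD 4] := by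
    intro j
    obtain ⟨k, hk⟩ := hu j
    have hu2 : (u j : ℤ) = 2 * k + 1 := by rw [hk]; push_cast; ring
    rcases Nat.even_or_odd (v j) with hev | hod
    · obtain ⟨t, ht⟩ := hev
      have hw4 : (w j : ℤ) = 4 * t := by rw [hwv j, ht]; push_cast; ring
      have ht1 : 1 ≤ t := by have := hvpos j; omega
      have haodd : Odd (a j - 1) := by
        have h2 : a j = 2 * (p ^ (e j + 1) * t) := by simp only [ha]; rw [ht]; ring
        have h3 : 1 ≤ p ^ (e j + 1) * t :=
          Nat.one_le_iff_ne_zero.mpr (by positivity)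
        exact ⟨p ^ (e j + 1) * t - 1, by omega⟩
      rw [haodd.neg_one_pow]
      refine Int.ModEq.symm (Int.modEq_iff_dvd.mpr ⟨-((k : ℤ) ^ 2 + k - t * p * (2 * k + 1)), ?_⟩)
      rw [hw4, hu2]
      ring
    · obtain ⟨t, ht⟩ := hod
      obtain ⟨m, hm⟩ := hpodd
      have hp2 : (p : ℤ) = 2 * m + 1 := by rw [hm]; push_cast; ring
      have hw2 : (w j : ℤ) = 2 * (2 * t + 1) := by rw [hwv j, ht]; push_cast; ring
      have haeven : Even (a j - 1) := by
        have hpodd' : Odd p := ⟨m, hm⟩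
        have hpe : Odd (p ^ (e j + 1)) := hpodd'.pow
        obtain ⟨c, hc⟩ := hpe.mul (⟨t, by omega⟩ : Odd (v j))
        simp only [ha]
        exact ⟨c, by omega⟩
      rw [haeven.neg_one_pow]
      refine Int.ModEq.symm (Int.modEq_iff_dvd.mpr
        ⟨-((k : ℤ) ^ 2 - 4 * k * t * m - 2 * k * t - 2 * k * m - 2 * t * m - t - m), ?_⟩)
      rw [hw2, hu2, hp2]
      ring
  -- assemble via ZMod 4
  rw [hN]
  have h4 : ((4 : ℕ) : ℤ) = 4 := by norm_num
  rw [← h4]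
  refine (ZMod.intCast_eq_intCast_iff _ _ _).mp ?_
  push_cast
  calc (∏ j : Fin s, ((u j : ZMod 4) * ((w j : ZMod 4) * p - u j)))
      = ∏ j : Fin s, (-1 : ZMod 4) ^ (a j - 1) := by
        refine Finset.prod_congr rfl fun j _ => ?_
        have := (ZMod.intCast_eq_intCast_iff _ _ 4).mpr (by exact_mod_cast key j)
        push_cast at this
        exact this
    _ = (-1 : ZMod 4) ^ (∑ j : Fin s, (a j - 1)) := Finset.prod_pow_eq_pow_sum _ _ _
end
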